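/- Let n, B be positive integers, γ > 0, δ ≥ 0, and let λ1 ≥ λ2 ≥ … ≥ λ_d > 0 with γ < γ̄ := 2nB(λ1² + nδ)/(λ1² Σ_{i=1}^d λ_i²). Set ϑ := 2 + 2nB(λ1² + nδ)/(γλ1⁴) − (Σ_{i=1}^d λ_i²)/λ1². Then for every ρ with 2 ≤ ρ < ϑ, the infimum of q(·, ρ) over the interval [λ_d², λ1²] is strictly positive: inf_{m ∈ [λ_d², λ1²]} q(m, ρ) > 0, where q(m, ρ) := 2nB(m + nδ)/γ − (Σ_{i=1}^d λ_i²)·m + (2 − ρ)m². -/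

import Mathlib

open Finset

/-- The auxiliary quadratic `q(m, ρ) = 2nB(m + nδ)/γ − T·m + (2 − ρ)m²`,
where `T = Σ_{i=1}^d λ_i²`. -/
noncomputable def qAux (n B : ℕ) (γ δ T m ρ : ℝ) : ℝ :=
  2 * n * B * (m + n * δ) / γ - T * m + (2 - ρ) * m ^ 2

/-!
At the right endpoint, `q(λ₁², ρ) = λ₁⁴ (ϑ - ρ) > 0`. For `ρ ≥ 2` and `δ ≥ 0` the ratio
`q(m, ρ) / m = 2nB/γ - T + 2n²Bδ/(γm) + (2 - ρ) m` is nonincreasing on `m > 0`, so `q(·, ρ)` stays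
positive on `(0, λ₁²]`. The infimum over the compact interval `[λ_d², λ₁²]` is attained, hence positive.
-/

section
variable {n B : ℕ} {γ δ T m ρ : ℝ}

theorem qAux_eq_sq_mul (hγ : γ ≠ 0) (hm : m ≠ 0) :
    qAux n B γ δ T m ρ = m ^ 2 * (2 + 2 * n * B * (m + n * δ) / (γ * m ^ 2) - T / m - ρ) := by
  unfold qAux
  field_simp
  ring

theorem qAux_pos_of_lt (hγ : 0 < γ) (hm : 0 < m)
    (hρ : ρ < 2 + 2 * n * B * (m + n * δ) / (γ * m ^ 2) - T / m) : 0 < qAux n B γ δ T m ρ := by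
  rw [qAux_eq_sq_mul hγ.ne' hm.ne']
  exact mul_pos (pow_pos hm 2) (sub_pos.mpr hρ)

theorem qAux_div_self (hm : m ≠ 0) :
    qAux n B γ δ T m ρ / m = 2 * n * B / γ - T + 2 * n * B * (n * δ) / (γ * m) + (2 - ρ) * m := by
  unfold qAux
  field_simp
  ring

theorem antitoneOn_qAux_div_self (hγ : 0 < γ) (hδ : 0 ≤ δ) (hρ : 2 ≤ ρ) :
    AntitoneOn (fun m => qAux n B γ δ T m ρ / m) (Set.Ioi 0) := by
  intro m (hm : 0 < m) m' (hm' : 0 < m') hle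
  simp only [qAux_div_self hm.ne', qAux_div_self hm'.ne']
  have hlinear : (2 - ρ) * m' ≤ (2 - ρ) * m := mul_le_mul_of_nonpos_left hle (by linarith)
  have hinverse : 2 * n * B * (n * δ) / (γ * m') ≤ 2 * n * B * (n * δ) / (γ * m) := by
    gcongr
  linarith

theorem qAux_pos_of_le {L : ℝ} (hγ : 0 < γ) (hδ : 0 ≤ δ) (hρ : 2 ≤ ρ) (hm : 0 < m) (hmL : m ≤ L)
    (hL : 0 < qAux n B γ δ T L ρ) : 0 < qAux n B γ δ T m ρ := by
  have hL0 : 0 < L := hm.trans_le hmL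
  have := antitoneOn_qAux_div_self (n := n) (B := B) (T := T) hγ hδ hρ hm hL0 hmL
  exact (div_pos_iff_of_pos_right hm).mp ((div_pos hL hL0).trans_le this)

end

theorem IsCompact.sInf_image_pos {α : Type*} [TopologicalSpace α] {f : α → ℝ} {s : Set α}
    (hs : IsCompact s) (hne : s.Nonempty) (hf : ContinuousOn f s) (hpos : ∀ x ∈ s, 0 < f x) :
    0 < sInf (f '' s) := by
  obtain ⟨x, hx, hfx⟩ := (hs.image_of_continuousOn hf).sInf_mem (hne.image f)
  exact hfx ▸ hpos x hx

theorem qAux_inf_pos (n B d : ℕ) (hd : 0 < d)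
    (γ δ : ℝ) (hγ : 0 < γ) (hδ : 0 ≤ δ)
    (lam : Fin d → ℝ) (hpos : ∀ i, 0 < lam i)
    (hdec : ∀ i j : Fin d, i ≤ j → lam j ≤ lam i) :
    ∀ ρ : ℝ, 2 ≤ ρ →
      ρ < 2 + 2 * n * B * ((lam ⟨0, hd⟩) ^ 2 + n * δ) / (γ * (lam ⟨0, hd⟩) ^ 4) -
        (∑ i, lam i ^ 2) / (lam ⟨0, hd⟩) ^ 2 →
      0 < sInf ((fun m => qAux n B γ δ (∑ i, lam i ^ 2) m ρ) ''
        Set.Icc ((lam ⟨d - 1, by omega⟩) ^ 2) ((lam ⟨0, hd⟩) ^ 2)) := by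
  intro ρ hρ hρϑ
  rw [show lam ⟨0, hd⟩ ^ 4 = (lam ⟨0, hd⟩ ^ 2) ^ 2 by ring] at hρϑ
  have hmax : 0 < qAux n B γ δ (∑ i, lam i ^ 2) (lam ⟨0, hd⟩ ^ 2) ρ :=
    qAux_pos_of_lt hγ (pow_pos (hpos _) 2) hρϑ
  have hmin_le_max : lam ⟨d - 1, by omega⟩ ^ 2 ≤ lam ⟨0, hd⟩ ^ 2 :=
    pow_le_pow_left₀ (hpos _).le (hdec _ _ (Fin.mk_le_mk.mpr (Nat.zero_le _))) 2
  refine isCompact_Icc.sInf_image_pos (Set.nonempty_Icc.mpr hmin_le_max)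
    (by unfold qAux; fun_prop) fun m hm => ?_
  exact qAux_pos_of_le hγ hδ hρ ((pow_pos (hpos _) 2).trans_le hm.1) hm.2 hmax
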